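/- Let X₁, X₂, X₃ be i.i.d. Exp(1) random variables. Then max(X₁, X₂, X₃) and X₁/3 + max(X₂, X₃) have the same distribution. -/

import Mathlib

/-!
Compare distribution functions. With `F` the exponential CDF, independence gives `F³` for the
maximum of all three variables and `F²` for `max (X 1) (X 2)`, so the CDF of
`X 0 / 3 + max (X 1) (X 2)` at `t` is `∫ F (t - a / 3)² dExp(a)`. On `[0, 3t]`, writing
`s = exp (-r a / 3)` and `u = exp (-r t)`, the integrand is `r s (s - u)² = d/da (-(s - u)³)`,
which integrates to `(1 - u)³ = F(t)³`.
-/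

open MeasureTheory ProbabilityTheory Real Set

lemma integral_mul_exp_div_three_mul_sub_sq (r t : ℝ) :
    ∫ a in 0..3 * t, r * exp (-(r * a) / 3) * (exp (-(r * a) / 3) - exp (-(r * t))) ^ 2
      = (1 - exp (-(r * t))) ^ 3 := by
  have hderiv (a : ℝ) : HasDerivAt (fun a ↦ -(exp (-(r * a) / 3) - exp (-(r * t))) ^ 3)
      (r * exp (-(r * a) / 3) * (exp (-(r * a) / 3) - exp (-(r * t))) ^ 2) a := by
    have hs : HasDerivAt (fun a ↦ -(r * a) / 3) (-r / 3) a := by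
      simpa using ((hasDerivAt_id a).const_mul r).neg.div_const 3
    refine ((hs.exp.sub_const _).fun_pow 3).fun_neg.congr_deriv ?_
    push_cast
    ring
  rw [intervalIntegral.integral_eq_sub_of_hasDerivAt (fun a _ ↦ hderiv a)
    (Continuous.intervalIntegrable (by fun_prop) _ _)]
  simp [show -(r * (3 * t)) / 3 = -(r * t) by ring]

namespace ProbabilityTheory

section Independent

variable {Ω : Type*} [MeasurableSpace Ω] {μ : Measure Ω} [IsProbabilityMeasure μ] {X Y : Ω → ℝ}

lemma IndepFun.cdf_map_max (hXY : IndepFun X Y μ) (hX : Measurable X) (hY : Measurable Y)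
    (t : ℝ) : cdf (μ.map fun ω ↦ max (X ω) (Y ω)) t = cdf (μ.map X) t * cdf (μ.map Y) t := by
  have := Measure.isProbabilityMeasure_map (μ := μ) hX.aemeasurable
  have := Measure.isProbabilityMeasure_map (μ := μ) hY.aemeasurable
  have := Measure.isProbabilityMeasure_map (μ := μ) (hX.max hY).aemeasurable
  have hpre : (fun ω ↦ max (X ω) (Y ω)) ⁻¹' Iic t = X ⁻¹' Iic t ∩ Y ⁻¹' Iic t := by
    ext ω; simp
  simp only [cdf_eq_real, measureReal_def, Measure.map_apply (hX.max hY) measurableSet_Iic,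
    Measure.map_apply hX measurableSet_Iic, Measure.map_apply hY measurableSet_Iic, hpre,
    hXY.measure_inter_preimage_eq_mul _ _ measurableSet_Iic measurableSet_Iic,
    ENNReal.toReal_mul]

lemma cdf_conv (ρ ν : Measure ℝ) [IsProbabilityMeasure ρ] [IsProbabilityMeasure ν] (t : ℝ) :
    cdf (ρ ∗ ν) t = ∫ x, cdf ν (t - x) ∂ρ := by
  rw [cdf_eq_real, measureReal_def, Measure.conv,
    Measure.map_apply measurable_add measurableSet_Iic,
    Measure.prod_apply (measurable_add measurableSet_Iic),
    integral_eq_lintegral_of_nonneg_ae (ae_of_all _ fun x ↦ cdf_nonneg ν _)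
      ((monotone_cdf ν).measurable.comp (measurable_const_sub t)).aestronglyMeasurable]
  congr 1
  refine lintegral_congr fun x ↦ ?_
  rw [ofReal_cdf]
  congr 1
  ext y
  simp [le_sub_iff_add_le']

lemma IndepFun.cdf_map_add (hXY : IndepFun X Y μ) (hX : Measurable X) (hY : Measurable Y)
    (t : ℝ) : cdf (μ.map (X + Y)) t = ∫ x, cdf (μ.map Y) (t - x) ∂(μ.map X) := by
  have := Measure.isProbabilityMeasure_map (μ := μ) hX.aemeasurable
  have := Measure.isProbabilityMeasure_map (μ := μ) hY.aemeasurable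
  rw [hXY.map_add_eq_map_conv_map hX hY, cdf_conv]

end Independent

lemma exponentialPDFReal_eq (r x : ℝ) :
    exponentialPDFReal r x = if 0 ≤ x then r * exp (-(r * x)) else 0 := by
  simp [exponentialPDFReal, gammaPDFReal]

lemma integral_expMeasure_eq_integral_mul {r : ℝ} (hr : 0 < r) (g : ℝ → ℝ) :
    ∫ a, g a ∂expMeasure r = ∫ a, exponentialPDFReal r a * g a := by
  rw [expMeasure, gammaMeasure, integral_withDensity_eq_integral_toReal_smul
    (f := gammaPDF 1 r) (measurable_gammaPDFReal 1 r).ennreal_ofReal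
    (ae_of_all _ fun _ ↦ ENNReal.ofReal_lt_top)]
  simp_rw [smul_eq_mul, gammaPDF, ENNReal.toReal_ofReal (gammaPDFReal_nonneg one_pos hr _)]
  rfl

lemma integral_cdf_expMeasure_sub_div_three_sq {r : ℝ} (hr : 0 < r) (t : ℝ) :
    ∫ a, cdf (expMeasure r) (t - a / 3) ^ 2 ∂expMeasure r = cdf (expMeasure r) t ^ 3 := by
  have hpt (a : ℝ) : exponentialPDFReal r a * cdf (expMeasure r) (t - a / 3) ^ 2 =
      (Icc 0 (3 * t)).indicator
        (fun a ↦ r * exp (-(r * a) / 3) * (exp (-(r * a) / 3) - exp (-(r * t))) ^ 2) a := by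
    by_cases ha : a ∈ Icc 0 (3 * t)
    · have hcube : exp (-(r * a)) = exp (-(r * a) / 3) ^ 3 := by
        rw [← exp_nat_mul]; ring_nf
      have hu : exp (-(r * a) / 3) * exp (-(r * (t - a / 3))) = exp (-(r * t)) := by
        rw [← exp_add]; ring_nf
      rw [indicator_of_mem ha, exponentialPDFReal_eq, cdf_expMeasure_eq hr, if_pos ha.1,
        if_pos (by linarith [ha.2]), hcube, ← hu]
      ring
    · rw [indicator_of_notMem ha]
      rcases lt_or_ge a 0 with ha0 | ha0
      · simp [exponentialPDFReal_eq, ha0.not_ge]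
      · have hneg : t - a / 3 < 0 := by
          simp only [mem_Icc, not_and, not_le] at ha
          linarith [ha ha0]
        simp [cdf_expMeasure_eq hr, hneg.not_ge]
  simp_rw [integral_expMeasure_eq_integral_mul hr, hpt, integral_indicator measurableSet_Icc]
  rcases lt_or_ge t 0 with ht | ht
  · rw [Icc_eq_empty (by linarith), setIntegral_empty, cdf_expMeasure_eq hr, if_neg ht.not_ge]
    norm_num
  · rw [integral_Icc_eq_integral_Ioc, ← intervalIntegral.integral_of_le (by linarith),
      integral_mul_exp_div_three_mul_sub_sq, cdf_expMeasure_eq hr, if_pos ht]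

end ProbabilityTheory

/-- Yanev–Chakraborty characterization, forward direction: for i.i.d. Exp(1) variables,
`max (X 0, X 1, X 2)` and `X 0 / 3 + max (X 1, X 2)` have the same distribution. -/
theorem yanev_chakraborty_forward {Ω : Type*} [MeasurableSpace Ω] (μ : Measure Ω)
    [IsProbabilityMeasure μ]
    (X : Fin 3 → Ω → ℝ) (hX : ∀ i, Measurable (X i))
    (hind : iIndepFun X μ)
    (hexp : ∀ i, μ.map (X i) = expMeasure 1) :
    μ.map (fun ω => max (X 0 ω) (max (X 1 ω) (X 2 ω))) =
      μ.map (fun ω => X 0 ω / 3 + max (X 1 ω) (X 2 ω)) := by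
  set Y := fun ω ↦ max (X 1 ω) (X 2 ω)
  have hY : Measurable Y := (hX 1).max (hX 2)
  have hX0Y : IndepFun (X 0) Y μ :=
    ((hind.indepFun_prodMk hX 1 2 0 (by decide) (by decide)).comp
      (measurable_fst.max measurable_snd) measurable_id).symm
  have hcdfY (t : ℝ) : cdf (μ.map Y) t = cdf (expMeasure 1) t ^ 2 := by
    rw [(hind.indepFun (by decide)).cdf_map_max (hX 1) (hX 2), hexp, hexp, sq]
  have := Measure.isProbabilityMeasure_map (μ := μ) ((hX 0).max hY).aemeasurable
  have := Measure.isProbabilityMeasure_map (μ := μ) (((hX 0).div_const 3).add hY).aemeasurable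
  refine Measure.eq_of_cdf _ _ (StieltjesFunction.ext fun t ↦ ?_)
  have hthird : Measurable fun a : ℝ ↦ a / 3 := measurable_id.div_const 3
  calc cdf (μ.map fun ω ↦ max (X 0 ω) (Y ω)) t
      = cdf (expMeasure 1) t ^ 3 := by
        rw [hX0Y.cdf_map_max (hX 0) hY, hcdfY, hexp]; ring
    _ = ∫ a, cdf (expMeasure 1) (t - a / 3) ^ 2 ∂expMeasure 1 :=
        (integral_cdf_expMeasure_sub_div_three_sq one_pos t).symm
    _ = ∫ x, cdf (μ.map Y) (t - x) ∂(μ.map fun ω ↦ X 0 ω / 3) := by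
        have hlaw : μ.map (fun ω ↦ X 0 ω / 3) = (expMeasure 1).map (· / 3) := by
          rw [← hexp 0, Measure.map_map hthird (hX 0)]
          rfl
        simp_rw [hcdfY]
        rw [hlaw, integral_map hthird.aemeasurable ?_]
        exact ((monotone_cdf _).measurable.comp (measurable_const_sub t)).pow_const 2
          |>.aestronglyMeasurable
    _ = cdf (μ.map fun ω ↦ X 0 ω / 3 + Y ω) t :=
        ((hX0Y.comp hthird measurable_id).cdf_map_add ((hX 0).div_const 3) hY t).symm
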